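/- arXiv:1106.1762 — 5 statements merged into one kernel-verified Lean document; each statement's English description precedes it below -/
import Mathlib

section
/- If an STS(v) admits a strict k-bicoloring with color classes of sizes n₁,…,n_k, then any STS(2v+1) obtained from it by the doubling construction admits a strict (k+1)-bicoloring with color class sizes n₁,…,n_k, v+1, obtained by giving all v+1 new points a new color. -/
open Finset

def isSTS {α : Type*} [DecidableEq α] (V : Finset α) (B : Finset (Finset α)) : Prop :=
  (∀ T ∈ B, T ⊆ V ∧ T.card = 3) ∧
  ∀ p : Finset α, p ⊆ V → p.card = 2 → ∃! T, T ∈ B ∧ p ⊆ T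

def isOneFactorization {α : Type*} [DecidableEq α] {v : ℕ}
    (X : Finset α) (F : Fin v → Finset (Finset α)) : Prop :=
  (∀ i, ∀ e ∈ F i, e ⊆ X ∧ e.card = 2) ∧
  (∀ i, ∀ x ∈ X, ∃! e, e ∈ F i ∧ x ∈ e) ∧
  (∀ e : Finset α, e ⊆ X → e.card = 2 → ∃! i, e ∈ F i)

def doublingBlocks {α : Type*} [DecidableEq α] {v : ℕ}
    (a : Fin v → α) (F : Fin v → Finset (Finset α)) : Finset (Finset α) :=
  Finset.univ.biUnion fun i => (F i).image fun e => insert (a i) e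

/-- A strict `k`-bicoloring: every triple receives exactly two colors and
all `k` colors are used on `V`. -/
def isStrictBicoloring {α : Type*} [DecidableEq α] {k : ℕ}
    (V : Finset α) (B : Finset (Finset α)) (φ : α → Fin k) : Prop :=
  (∀ T ∈ B, (T.image φ).card = 2) ∧ ∀ i : Fin k, ∃ x ∈ V, φ x = i

/-! Triples of the original system lie in `V`, away from the new points, so they keep their two
colors; a doubling triple `{aᵢ, x, y}` sees exactly the color of `aᵢ` and the new color. -/

theorem mem_doublingBlocks {α : Type*} [DecidableEq α] {v : ℕ} {a : Fin v → α}
    {F : Fin v → Finset (Finset α)} {T : Finset α} :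
    T ∈ doublingBlocks a F ↔ ∃ i, ∃ e ∈ F i, insert (a i) e = T := by
  simp [doublingBlocks]

section extendColoring

variable {α : Type*} [DecidableEq α] {k : ℕ} (X : Finset α) (φ : α → Fin k)

def extendColoring (x : α) : Fin (k + 1) :=
  if x ∈ X then Fin.last k else (φ x).castSucc

variable {X φ}

theorem extendColoring_of_mem {x : α} (hx : x ∈ X) : extendColoring X φ x = Fin.last k :=
  if_pos hx

theorem extendColoring_of_notMem {x : α} (hx : x ∉ X) :
    extendColoring X φ x = (φ x).castSucc :=
  if_neg hx

theorem extendColoring_eq_castSucc_iff {x : α} (hx : x ∉ X) (i : Fin k) :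
    extendColoring X φ x = i.castSucc ↔ φ x = i := by
  rw [extendColoring_of_notMem hx, Fin.castSucc_inj]

theorem extendColoring_ne_last {x : α} (hx : x ∉ X) : extendColoring X φ x ≠ Fin.last k := by
  rw [extendColoring_of_notMem hx]
  exact (Fin.castSucc_lt_last _).ne

theorem image_extendColoring_of_disjoint {T : Finset α} (hT : Disjoint T X) :
    T.image (extendColoring X φ) = (T.image φ).map Fin.castSuccEmb := by
  rw [map_eq_image, image_image]
  exact image_congr fun x hx => extendColoring_of_notMem (disjoint_left.mp hT hx)

theorem card_image_extendColoring_insert {p : α} {e : Finset α} (hp : p ∉ X) (he : e ⊆ X)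
    (he₀ : e.Nonempty) : ((insert p e).image (extendColoring X φ)).card = 2 := by
  have himage : e.image (extendColoring X φ) = {Fin.last k} :=
    (image_congr fun x hx => extendColoring_of_mem (he hx)).trans (image_const he₀ _)
  rw [image_insert, himage]
  exact card_pair (extendColoring_ne_last hp)

theorem filter_extendColoring_eq_castSucc {V : Finset α} (hVX : Disjoint V X) (i : Fin k) :
    (V ∪ X).filter (fun x => extendColoring X φ x = i.castSucc) = V.filter (φ · = i) := by
  have hfilterX : X.filter (fun x => extendColoring X φ x = i.castSucc) = ∅ :=
    filter_false_of_mem fun x hx => by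
      rw [extendColoring_of_mem hx]; exact (Fin.castSucc_lt_last i).ne'
  rw [filter_union, hfilterX, union_empty]
  exact filter_congr fun x hx => extendColoring_eq_castSucc_iff (disjoint_left.mp hVX hx) i

theorem filter_extendColoring_eq_last {V : Finset α} (hVX : Disjoint V X) :
    (V ∪ X).filter (fun x => extendColoring X φ x = Fin.last k) = X := by
  rw [filter_union, filter_true_of_mem fun x hx => extendColoring_of_mem hx,
    filter_false_of_mem fun x hx => extendColoring_ne_last (disjoint_left.mp hVX hx),
    empty_union]

theorem isStrictBicoloring_extendColoring {V : Finset α} {B D : Finset (Finset α)}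
    (hφ : isStrictBicoloring V B φ) (hB : ∀ T ∈ B, T ⊆ V) (hVX : Disjoint V X)
    (hX : X.Nonempty) (hD : ∀ T ∈ D, ∃ p ∉ X, ∃ e ⊆ X, e.Nonempty ∧ insert p e = T) :
    isStrictBicoloring (V ∪ X) (B ∪ D) (extendColoring X φ) := by
  refine ⟨fun T hT => ?_, fun j => ?_⟩
  · rcases mem_union.mp hT with hTB | hTD
    · rw [image_extendColoring_of_disjoint (hVX.mono_left (hB T hTB)), card_map]
      exact hφ.1 T hTB
    · obtain ⟨p, hp, e, he, he₀, rfl⟩ := hD T hTD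
      exact card_image_extendColoring_insert hp he he₀
  · rcases Fin.eq_castSucc_or_eq_last j with ⟨i, rfl⟩ | rfl
    · obtain ⟨x, hxV, rfl⟩ := hφ.2 i
      exact ⟨x, mem_union_left _ hxV, extendColoring_of_notMem (disjoint_left.mp hVX hxV)⟩
    · obtain ⟨x, hx⟩ := hX
      exact ⟨x, mem_union_right _ hx, extendColoring_of_mem hx⟩

end extendColoring

theorem stmt_3_general {α : Type*} [DecidableEq α] (v k : ℕ)
    (V : Finset α) (B : Finset (Finset α)) (hSTS : isSTS V B)
    (φ : α → Fin k) (hφ : isStrictBicoloring V B φ)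
    (n : Fin k → ℕ) (hn : ∀ i, (V.filter fun x => φ x = i).card = n i)
    (X : Finset α) (hX : X.card = v + 1) (hdisj : Disjoint V X)
    (F : Fin v → Finset (Finset α)) (hF : isOneFactorization X F)
    (a : Fin v → α) (haV : V = Finset.image a Finset.univ) :
    ∃ ψ : α → Fin (k + 1),
      isStrictBicoloring (V ∪ X) (B ∪ doublingBlocks a F) ψ ∧
      (∀ x ∈ V, ψ x = Fin.castSucc (φ x)) ∧
      (∀ x ∈ X, ψ x = Fin.last k) ∧
      (∀ i : Fin k, ((V ∪ X).filter fun x => ψ x = Fin.castSucc i).card = n i) ∧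
      (((V ∪ X).filter fun x => ψ x = Fin.last k).card = v + 1) := by
  have hdoubling : ∀ T ∈ doublingBlocks a F, ∃ p ∉ X, ∃ e ⊆ X, e.Nonempty ∧ insert p e = T := by
    intro T hT
    obtain ⟨i, e, he, rfl⟩ := mem_doublingBlocks.mp hT
    have haiV : a i ∈ V := haV ▸ mem_image_of_mem a (mem_univ i)
    obtain ⟨heX, he₂⟩ := hF.1 i e he
    exact ⟨a i, disjoint_left.mp hdisj haiV, e, heX, card_pos.mp (by omega), rfl⟩
  refine ⟨extendColoring X φ,
    isStrictBicoloring_extendColoring hφ (fun T hT => (hSTS.1 T hT).1) hdisj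
      (card_pos.mp (by omega)) hdoubling,
    fun x hx => extendColoring_of_notMem (disjoint_left.mp hdisj hx),
    fun x hx => extendColoring_of_mem hx, fun i => ?_, ?_⟩
  · rw [filter_extendColoring_eq_castSucc hdisj, hn]
  · rw [filter_extendColoring_eq_last hdisj, hX]

theorem stmt_3 {α : Type*} [DecidableEq α] (v k : ℕ)
    (V : Finset α) (B : Finset (Finset α)) (hV : V.card = v) (hSTS : isSTS V B)
    (φ : α → Fin k) (hφ : isStrictBicoloring V B φ)
    (n : Fin k → ℕ) (hn : ∀ i, (V.filter fun x => φ x = i).card = n i)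
    (X : Finset α) (hX : X.card = v + 1) (hdisj : Disjoint V X)
    (F : Fin v → Finset (Finset α)) (hF : isOneFactorization X F)
    (a : Fin v → α) (ha : Function.Injective a) (haV : V = Finset.image a Finset.univ) :
    ∃ ψ : α → Fin (k + 1),
      isStrictBicoloring (V ∪ X) (B ∪ doublingBlocks a F) ψ ∧
      (∀ x ∈ V, ψ x = Fin.castSucc (φ x)) ∧
      (∀ x ∈ X, ψ x = Fin.last k) ∧
      (∀ i : Fin k, ((V ∪ X).filter fun x => ψ x = Fin.castSucc i).card = n i) ∧
      (((V ∪ X).filter fun x => ψ x = Fin.last k).card = v + 1) :=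
  stmt_3_general v k V B hSTS φ hφ n hn X hX hdisj F hF a haV
end

section
/- Let S=(V,B) be an STS(v) with a strict k-bicoloring φ with color class sizes n₁,…,n_k, and let S'=(V ∪ Y, B ∪ C) be an STS(2v+1) obtained by a doubling construction using a 1-factorization F₁,…,F_v of the complete graph on Y, |Y| = v+1, where F_i is associated with vertex a_i of V. Suppose φ' is an extended k-bicoloring of S' (a strict k-bicoloring of S' restricting to φ on V and using the same k colors on Y). Let c_i be the number of elements of Y colored i. Then Σ_{i=1}^k c_i² + 2 Σ_{i=1}^k n_i c_i = (v+1)². -/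
open Finset

theorem stmt_4 {α : Type*} [DecidableEq α] (v k : ℕ)
    (V : Finset α) (B : Finset (Finset α)) (hV : V.card = v) (hSTS : isSTS V B)
    (Y : Finset α) (hY : Y.card = v + 1) (hdisj : Disjoint V Y)
    (F : Fin v → Finset (Finset α)) (hF : isOneFactorization Y F)
    (a : Fin v → α) (ha : Function.Injective a) (haV : V = Finset.image a Finset.univ)
    (ψ : α → Fin k)
    -- `ψ` is an extended `k`-bicoloring of the doubled system `S'`:
    (hext : isStrictBicoloring (V ∪ Y) (B ∪ doublingBlocks a F) ψ)
    -- whose restriction to `V` is a strict `k`-bicoloring of `S`: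
    (hres : isStrictBicoloring V B ψ)
    (n : Fin k → ℕ) (hn : ∀ i, (V.filter fun x => ψ x = i).card = n i)
    (c : Fin k → ℕ) (hc : ∀ i, (Y.filter fun x => ψ x = i).card = c i) :
    (∑ i : Fin k, (c i) ^ 2) + 2 * ∑ i : Fin k, n i * c i = (v + 1) ^ 2 := by
  classical
  obtain ⟨hFsub, hFpoint, hFedge⟩ := hF
  have haY : ∀ i, a i ∉ Y := fun i hiY =>
    Finset.disjoint_left.mp hdisj (haV ▸ Finset.mem_image_of_mem a (mem_univ i)) hiY
  have hblock : ∀ i : Fin v, ∀ e ∈ F i, ((insert (a i) e).image ψ).card = 2 := by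
    intro i e he
    apply hext.1
    apply Finset.mem_union_right
    simp only [doublingBlocks, Finset.mem_biUnion, Finset.mem_image]
    exact ⟨i, mem_univ i, e, he, rfl⟩
  have hL1 : ∀ (i : Fin v) (x y : α), ({x, y} : Finset α) ∈ F i → ψ x ≠ ψ y →
      ψ x = ψ (a i) ∨ ψ y = ψ (a i) := by
    intro i x y he hxy
    by_contra hcon
    push_neg at hcon
    have h2 := hblock i _ he
    have him : (insert (a i) ({x, y} : Finset α)).image ψ = {ψ (a i), ψ x, ψ y} := by
      simp [Finset.image_insert]
    rw [him] at h2
    have h3 : ({ψ (a i), ψ x, ψ y} : Finset (Fin k)).card = 3 := by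
      rw [Finset.card_insert_of_notMem (by simp [Ne.symm hcon.1, Ne.symm hcon.2]),
        Finset.card_insert_of_notMem (by simp [hxy]), Finset.card_singleton]
    omega
  have hL2 : ∀ (i : Fin v) (x y : α), ({x, y} : Finset α) ∈ F i →
      ψ x = ψ (a i) → ψ y ≠ ψ x := by
    intro i x y he hcol heq
    have h2 := hblock i _ he
    have him : (insert (a i) ({x, y} : Finset α)).image ψ = {ψ x} := by
      simp [Finset.image_insert, heq, ← hcol]
    rw [him] at h2
    simp at h2
  have hpair : ∀ e : Finset α, e.card = 2 → ∀ x ∈ e, ∃ y, y ≠ x ∧ e = {x, y} := by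
    intro e he x hx
    obtain ⟨u, w, huw, rfl⟩ := Finset.card_eq_two.mp he
    rcases Finset.mem_insert.mp hx with rfl | hx
    · exact ⟨w, Ne.symm huw, rfl⟩
    · rcases Finset.mem_singleton.mp hx with rfl
      exact ⟨u, huw, Finset.pair_comm u x⟩
  have hpartner : ∀ (i : Fin v) (x : α), x ∈ Y →
      ∃ y, y ≠ x ∧ ({x, y} : Finset α) ∈ F i ∧
        ∀ z, z ≠ x → ({x, z} : Finset α) ∈ F i → z = y := by
    intro i x hx
    obtain ⟨e, ⟨heF, hxe⟩, huniq⟩ := hFpoint i x hx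
    obtain ⟨y, hyx, rfl⟩ := hpair e (hFsub i e heF).2 x hxe
    refine ⟨y, hyx, heF, ?_⟩
    intro z hzx hz
    have heq := huniq {x, z} ⟨hz, Finset.mem_insert_self x _⟩
    have hzm : z ∈ ({x, y} : Finset α) := heq ▸ (by simp : z ∈ ({x, z} : Finset α))
    rcases Finset.mem_insert.mp hzm with h | h
    · exact absurd h hzx
    · exact Finset.mem_singleton.mp h
  -- the four counting sets
  set D := (Y ×ˢ Y).filter (fun p => ψ p.1 = ψ p.2) with hDdef
  set N := (Y ×ˢ Y).filter (fun p => ¬ ψ p.1 = ψ p.2) with hNdef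
  set T := ((univ : Finset (Fin v)) ×ˢ Y).filter (fun q => ψ q.2 = ψ (a q.1)) with hTdef
  set W := ((univ : Finset (Fin v)) ×ˢ (Y ×ˢ Y)).filter
      (fun q => ({q.2.1, q.2.2} : Finset α) ∈ F q.1 ∧ ¬ ψ q.2.1 = ψ q.2.2) with hWdef
  have hDN : D.card + N.card = (v + 1) * (v + 1) := by
    rw [hDdef, hNdef, Finset.card_filter_add_card_filter_not, Finset.card_product, hY]
  -- D.card = ∑ c i ^ 2
  have hD : D.card = ∑ i : Fin k, (c i) ^ 2 := by
    rw [Finset.card_eq_sum_card_fiberwise (f := fun p => ψ p.1) (t := univ)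
      (fun _ _ => mem_univ _)]
    refine Finset.sum_congr rfl fun j _ => ?_
    have hfib : D.filter (fun p => ψ p.1 = j)
        = (Y.filter fun x => ψ x = j) ×ˢ (Y.filter fun x => ψ x = j) := by
      ext ⟨x, y⟩
      simp only [hDdef, Finset.mem_filter, Finset.mem_product]
      constructor
      · rintro ⟨⟨⟨hx, hy⟩, hxy⟩, hj⟩
        exact ⟨⟨hx, hj⟩, ⟨hy, hxy ▸ hj⟩⟩
      · rintro ⟨⟨hx, hjx⟩, ⟨hy, hjy⟩⟩
        exact ⟨⟨⟨hx, hy⟩, hjx.trans hjy.symm⟩, hjx⟩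
    rw [hfib, Finset.card_product, hc, sq]
  -- T.card = ∑ n i * c i
  have hna : ∀ j, (univ.filter fun i => ψ (a i) = j).card = n j := by
    intro j
    rw [← hn j, haV, Finset.filter_image, Finset.card_image_of_injective _ ha]
  have hT : T.card = ∑ j : Fin k, n j * c j := by
    have h1 : T.card = ∑ i : Fin v, c (ψ (a i)) := by
      rw [Finset.card_eq_sum_card_fiberwise (f := Prod.fst) (t := univ)
        (fun _ _ => mem_univ _)]
      refine Finset.sum_congr rfl fun i _ => ?_
      have hfib : T.filter (fun q => q.1 = i)
          = ({i} : Finset (Fin v)) ×ˢ (Y.filter fun x => ψ x = ψ (a i)) := by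
        ext ⟨i', x⟩
        simp only [hTdef, Finset.mem_filter, Finset.mem_product, Finset.mem_singleton,
          Finset.mem_univ, true_and]
        constructor
        · rintro ⟨⟨hx, hcol⟩, rfl⟩
          exact ⟨rfl, hx, hcol⟩
        · rintro ⟨rfl, hx, hcol⟩
          exact ⟨⟨hx, hcol⟩, rfl⟩
      rw [hfib, Finset.card_product, Finset.card_singleton, one_mul, hc]
    rw [h1, ← Finset.sum_fiberwise univ (fun i => ψ (a i)) (fun i => c (ψ (a i)))]
    refine Finset.sum_congr rfl fun j _ => ?_
    rw [Finset.sum_congr rfl (fun i hi => by rw [(Finset.mem_filter.mp hi).2]),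
      Finset.sum_const, smul_eq_mul, hna]
  -- N.card = W.card
  have hNW : W.card = N.card := by
    apply Finset.card_bij (fun q _ => q.2)
    · intro q hq
      simp only [hWdef, hNdef, Finset.mem_filter, Finset.mem_product, Finset.mem_univ,
        true_and] at hq ⊢
      exact ⟨hq.1, hq.2.2⟩
    · intro q1 hq1 q2 hq2 h
      simp only [hWdef, Finset.mem_filter, Finset.mem_product, Finset.mem_univ, true_and] at hq1 hq2
      have hsub1 : ({q1.2.1, q1.2.2} : Finset α) ⊆ Y :=
        Finset.insert_subset hq1.1.1 (Finset.singleton_subset_iff.mpr hq1.1.2)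
      have hne1 : q1.2.1 ≠ q1.2.2 := fun hxy => hq1.2.2 (by rw [hxy])
      obtain ⟨i0, _, hiu⟩ := hFedge {q1.2.1, q1.2.2} hsub1 (Finset.card_pair hne1)
      have h1 : q1.1 = i0 := hiu q1.1 hq1.2.1
      have h2 : q2.1 = i0 := hiu q2.1 (by rw [h]; exact hq2.2.1)
      exact Prod.ext (h1.trans h2.symm) h
    · intro p hp
      simp only [hNdef, Finset.mem_filter, Finset.mem_product] at hp
      have hne : p.1 ≠ p.2 := fun hxy => hp.2 (by rw [hxy])
      have hsub : ({p.1, p.2} : Finset α) ⊆ Y :=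
        Finset.insert_subset hp.1.1 (Finset.singleton_subset_iff.mpr hp.1.2)
      obtain ⟨i0, hi0, _⟩ := hFedge {p.1, p.2} hsub (Finset.card_pair hne)
      refine ⟨(i0, p), ?_, rfl⟩
      simp only [hWdef, Finset.mem_filter, Finset.mem_product, Finset.mem_univ, true_and]
      exact ⟨hp.1, hi0, hp.2⟩
  -- W.card = 2 * T.card
  have hT1 : (W.filter fun q => ψ q.2.1 = ψ (a q.1)).card = T.card := by
    apply Finset.card_bij (fun q _ => (q.1, q.2.1))
    · intro q hq
      simp only [hWdef, hTdef, Finset.mem_filter, Finset.mem_product, Finset.mem_univ,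
        true_and] at hq ⊢
      exact ⟨hq.1.1.1, hq.2⟩
    · intro q1 hq1 q2 hq2 h
      simp only [hWdef, Finset.mem_filter, Finset.mem_product, Finset.mem_univ, true_and] at hq1 hq2
      obtain ⟨hi, hx⟩ := Prod.mk.injEq .. ▸ h
      obtain ⟨y, hyx, hyF, hyu⟩ := hpartner q1.1 q1.2.1 hq1.1.1.1
      have hy1 : q1.2.2 = y :=
        hyu q1.2.2 (fun hh => hq1.1.2.2 (by rw [hh])) hq1.1.2.1
      have hy2 : q2.2.2 = y := by
        apply hyu q2.2.2 (fun hh => hq2.1.2.2 (by rw [← hx, hh]))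
        rw [hi, hx]; exact hq2.1.2.1
      exact Prod.ext hi (Prod.ext hx (hy1.trans hy2.symm))
    · intro b hb
      simp only [hTdef, Finset.mem_filter, Finset.mem_product, Finset.mem_univ, true_and] at hb
      obtain ⟨y, hyx, hyF, _⟩ := hpartner b.1 b.2 hb.1
      have hyY : y ∈ Y := (hFsub b.1 _ hyF).1 (by simp)
      have hcolne : ψ y ≠ ψ b.2 := hL2 b.1 b.2 y hyF hb.2
      refine ⟨(b.1, b.2, y), ?_, rfl⟩
      simp only [hWdef, Finset.mem_filter, Finset.mem_product, Finset.mem_univ, true_and]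
      exact ⟨⟨⟨hb.1, hyY⟩, hyF, fun hh => hcolne hh.symm⟩, hb.2⟩
  have hT2 : (W.filter fun q => ¬ ψ q.2.1 = ψ (a q.1)).card = T.card := by
    have hW2 : W.filter (fun q => ¬ ψ q.2.1 = ψ (a q.1))
        = W.filter (fun q => ψ q.2.2 = ψ (a q.1)) := by
      apply Finset.filter_congr
      intro q hq
      simp only [hWdef, Finset.mem_filter, Finset.mem_product, Finset.mem_univ, true_and] at hq
      rcases hL1 q.1 q.2.1 q.2.2 hq.2.1 hq.2.2 with h | h
      · simp only [h, not_true, false_iff, eq_iff_iff, iff_false]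
        intro h2
        exact hq.2.2 (h.trans h2.symm)
      · simp only [h, eq_iff_iff, true_iff, iff_true]
        intro h1
        exact hq.2.2 (h1.trans h.symm)
    rw [hW2]
    apply Finset.card_bij (fun q _ => (q.1, q.2.2))
    · intro q hq
      simp only [hWdef, hTdef, Finset.mem_filter, Finset.mem_product, Finset.mem_univ,
        true_and] at hq ⊢
      exact ⟨hq.1.1.2, hq.2⟩
    · intro q1 hq1 q2 hq2 h
      simp only [hWdef, Finset.mem_filter, Finset.mem_product, Finset.mem_univ, true_and] at hq1 hq2
      obtain ⟨hi, hy⟩ := Prod.mk.injEq .. ▸ h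
      obtain ⟨x, hxy, hxF, hxu⟩ := hpartner q1.1 q1.2.2 hq1.1.1.2
      have hx1 : q1.2.1 = x :=
        hxu q1.2.1 (fun hh => hq1.1.2.2 (by rw [hh]))
          (by rw [Finset.pair_comm]; exact hq1.1.2.1)
      have hx2 : q2.2.1 = x := by
        apply hxu q2.2.1 (fun hh => hq2.1.2.2 (by rw [← hy, hh]))
        rw [hi, hy, Finset.pair_comm]; exact hq2.1.2.1
      exact Prod.ext hi (Prod.ext (hx1.trans hx2.symm) hy)
    · intro b hb
      simp only [hTdef, Finset.mem_filter, Finset.mem_product, Finset.mem_univ, true_and] at hb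
      obtain ⟨x, hxy, hxF, _⟩ := hpartner b.1 b.2 hb.1
      have hxY : x ∈ Y := (hFsub b.1 _ hxF).1 (by simp)
      have hcolne : ψ x ≠ ψ b.2 := hL2 b.1 b.2 x hxF hb.2
      refine ⟨(b.1, x, b.2), ?_, rfl⟩
      simp only [hWdef, Finset.mem_filter, Finset.mem_product, Finset.mem_univ, true_and]
      refine ⟨⟨⟨hxY, hb.1⟩, ?_, hcolne⟩, hb.2⟩
      rw [Finset.pair_comm]; exact hxF
  have hWT : W.card = T.card + T.card := by
    rw [← Finset.card_filter_add_card_filter_not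
      (p := fun q => ψ q.2.1 = ψ (a q.1)) (s := W), hT1, hT2]
  calc (∑ i : Fin k, (c i) ^ 2) + 2 * ∑ i : Fin k, n i * c i
      = D.card + (T.card + T.card) := by rw [hD, hT]; ring
    _ = D.card + N.card := by rw [← hWT, hNW]
    _ = (v + 1) ^ 2 := by rw [hDN, sq]
end

section
/- With the setup of the pair-counting identity for an extended bicoloring of a doubled STS (class sizes n₁,…,n_k in V and c₁,…,c_k in Y, |Y| = v+1): if c_j = 0 for some color j and n_j ≥ 1, then every c_i is even. -/
open Finset

theorem stmt_5 {α : Type*} [DecidableEq α] (v k : ℕ)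
    (V : Finset α) (B : Finset (Finset α)) (hV : V.card = v) (hSTS : isSTS V B)
    (Y : Finset α) (hY : Y.card = v + 1) (hdisj : Disjoint V Y)
    (F : Fin v → Finset (Finset α)) (hF : isOneFactorization Y F)
    (a : Fin v → α) (ha : Function.Injective a) (haV : V = Finset.image a Finset.univ)
    (ψ : α → Fin k)
    (hext : isStrictBicoloring (V ∪ Y) (B ∪ doublingBlocks a F) ψ)
    (hres : isStrictBicoloring V B ψ)
    (n : Fin k → ℕ) (hn : ∀ i, (V.filter fun x => ψ x = i).card = n i)
    (c : Fin k → ℕ) (hc : ∀ i, (Y.filter fun x => ψ x = i).card = c i)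
    (j : Fin k) (hcj : c j = 0) (hnj : 1 ≤ n j) :
    ∀ i : Fin k, Even (c i) := by
  -- find a j-colored vertex a q
  have hnemp : (V.filter fun x => ψ x = j).Nonempty := by
    rw [← Finset.card_pos, hn j]; omega
  obtain ⟨x, hx⟩ := hnemp
  rw [Finset.mem_filter] at hx
  obtain ⟨hxV, hxj⟩ := hx
  obtain ⟨q, -, rfl⟩ := by rw [haV] at hxV; exact Finset.mem_image.mp hxV
  -- no point of Y has color j
  have hYj : ∀ y ∈ Y, ψ y ≠ j := by
    intro y hy hyj
    have : (Y.filter fun x => ψ x = j).Nonempty := ⟨y, Finset.mem_filter.mpr ⟨hy, hyj⟩⟩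
    rw [← Finset.card_pos, hc j, hcj] at this; omega
  have haqY : a q ∉ Y := Finset.disjoint_left.mp hdisj hxV
  -- edges of F q are monochromatic
  have hmono : ∀ e ∈ F q, ∀ y z, y ∈ e → z ∈ e → ψ y = ψ z := by
    intro e he y z hy hz
    have heY := (hF.1 q e he).1
    have hT : insert (a q) e ∈ B ∪ doublingBlocks a F := by
      apply Finset.mem_union_right
      exact Finset.mem_biUnion.mpr ⟨q, Finset.mem_univ q, Finset.mem_image.mpr ⟨e, he, rfl⟩⟩
    have hcard := hext.1 _ hT
    by_contra hne
    have h3 : {j, ψ y, ψ z} ⊆ (insert (a q) e).image ψ := by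
      intro w hw
      simp only [Finset.mem_insert, Finset.mem_singleton] at hw
      rcases hw with rfl | rfl | rfl
      · exact Finset.mem_image.mpr ⟨a q, Finset.mem_insert_self _ _, hxj⟩
      · exact Finset.mem_image.mpr ⟨y, Finset.mem_insert_of_mem hy, rfl⟩
      · exact Finset.mem_image.mpr ⟨z, Finset.mem_insert_of_mem hz, rfl⟩
    have hyj' := hYj y (heY hy)
    have hzj' := hYj z (heY hz)
    have : ({j, ψ y, ψ z} : Finset (Fin k)).card = 3 := by
      rw [Finset.card_insert_of_notMem, Finset.card_insert_of_notMem,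
        Finset.card_singleton]
      · simpa using hne
      · simp only [Finset.mem_insert, Finset.mem_singleton]
        push_neg
        exact ⟨fun h => hyj' h.symm, fun h => hzj' h.symm⟩
    have := Finset.card_le_card h3
    omega
  -- edges of F q are pairwise disjoint
  have hdisjE : ∀ e₁ ∈ F q, ∀ e₂ ∈ F q, e₁ ≠ e₂ → Disjoint e₁ e₂ := by
    intro e₁ h₁ e₂ h₂ hne
    rw [Finset.disjoint_left]
    intro y hy₁ hy₂
    have hyY := (hF.1 q e₁ h₁).1 hy₁
    obtain ⟨e, -, huniq⟩ := hF.2.1 q y hyY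
    exact hne ((huniq e₁ ⟨h₁, hy₁⟩).trans (huniq e₂ ⟨h₂, hy₂⟩).symm)
  intro i
  set S := Y.filter fun x => ψ x = i with hS
  have hScover : S = (F q).biUnion fun e => e ∩ S := by
    apply Finset.Subset.antisymm
    · intro y hy
      have hyY : y ∈ Y := (Finset.mem_filter.mp hy).1
      obtain ⟨e, ⟨he, hye⟩, -⟩ := hF.2.1 q y hyY
      exact Finset.mem_biUnion.mpr ⟨e, he, Finset.mem_inter.mpr ⟨hye, hy⟩⟩
    · intro y hy
      obtain ⟨e, -, hy⟩ := Finset.mem_biUnion.mp hy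
      exact (Finset.mem_inter.mp hy).2
  have hcardsum : S.card = ∑ e ∈ F q, (e ∩ S).card := by
    conv_lhs => rw [hScover]
    exact Finset.card_biUnion (fun e₁ h₁ e₂ h₂ hne =>
      Finset.disjoint_of_subset_left Finset.inter_subset_left
        (Finset.disjoint_of_subset_right Finset.inter_subset_left (hdisjE e₁ h₁ e₂ h₂ hne)))
  have heven : ∀ e ∈ F q, Even ((e ∩ S).card) := by
    intro e he
    obtain ⟨y, z, hyz, hezy⟩ := Finset.card_eq_two.mp (hF.1 q e he).2
    subst hezy
    by_cases hi : ψ y = i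
    · have hz : ψ z = i := (hmono _ he z y (Finset.mem_insert_of_mem (Finset.mem_singleton_self z)) (Finset.mem_insert_self y {z})).trans hi
      have : ({y, z} : Finset α) ∩ S = {y, z} := by
        apply Finset.inter_eq_left.mpr
        intro w hw
        simp only [Finset.mem_insert, Finset.mem_singleton] at hw
        rcases hw with rfl | rfl
        · exact Finset.mem_filter.mpr ⟨(hF.1 q _ he).1 (by simp), hi⟩
        · exact Finset.mem_filter.mpr ⟨(hF.1 q _ he).1 (by simp), hz⟩
      rw [this, Finset.card_pair hyz]
      exact ⟨1, rfl⟩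
    · have : ({y, z} : Finset α) ∩ S = ∅ := by
        apply Finset.eq_empty_of_forall_notMem
        intro w hw
        rw [Finset.mem_inter, Finset.mem_insert, Finset.mem_singleton] at hw
        obtain ⟨rfl | rfl, hwS⟩ := hw
        · exact hi (Finset.mem_filter.mp hwS).2
        · exact hi ((hmono _ he y w (Finset.mem_insert_self y {w}) (Finset.mem_insert_of_mem (Finset.mem_singleton_self w))).trans (Finset.mem_filter.mp hwS).2)
      rw [this]
      exact Even.zero
  rw [← hc i, ← hS, hcardsum]
  exact Finset.even_sum _ heven
end

section
/- With the setup of an extended bicoloring of a doubled STS: if c_j > (v+1)/2 for some color j with n_j ≥ 1, a contradiction arises; hence no extended bicoloring exists with some color used on more than half of the v+1 new points while that color also appears in V. -/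
/-!
Pick a vertex `a q` of `V` with the majority color `j`. The 1-factor `F q` is a perfect matching
of `Y` with `(v + 1) / 2` edges, so by pigeonhole one of its edges `e` lies inside the more than
`(v + 1) / 2` points of `Y` colored `j`; the doubling block `{a q} ∪ e` is then monochromatic.
-/

open Finset

section

variable {α : Type*}

def IsPerfectMatchingOn (Y : Finset α) (E : Finset (Finset α)) : Prop :=
  (∀ e ∈ E, e ⊆ Y ∧ e.card = 2) ∧ ∀ x ∈ Y, ∃! e, e ∈ E ∧ x ∈ e

namespace IsPerfectMatchingOn

variable {Y : Finset α} {E : Finset (Finset α)}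

theorem pairwiseDisjoint (hE : IsPerfectMatchingOn Y E) :
    (E : Set (Finset α)).PairwiseDisjoint id := by
  intro e he e' he' hne
  refine Finset.disjoint_left.2 fun x hx hx' => hne ?_
  obtain ⟨_, -, huniq⟩ := hE.2 x ((hE.1 e he).1 hx)
  exact (huniq e ⟨he, hx⟩).trans (huniq e' ⟨he', hx'⟩).symm

variable [DecidableEq α]

theorem biUnion_eq (hE : IsPerfectMatchingOn Y E) : E.biUnion id = Y := by
  refine Subset.antisymm (fun x hx => ?_) (fun x hx => ?_)
  · obtain ⟨e, he, hxe⟩ := mem_biUnion.1 hx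
    exact (hE.1 e he).1 hxe
  · obtain ⟨e, ⟨he, hxe⟩, -⟩ := hE.2 x hx
    exact mem_biUnion.2 ⟨e, he, hxe⟩

theorem card_eq (hE : IsPerfectMatchingOn Y E) : Y.card = 2 * E.card := by
  rw [← hE.biUnion_eq, card_biUnion hE.pairwiseDisjoint]
  simp only [id, sum_congr rfl fun e he => (hE.1 e he).2, sum_const, smul_eq_mul, mul_comm]

theorem exists_subset_of_card_lt (hE : IsPerfectMatchingOn Y E) {S : Finset α}
    (hS : S ⊆ Y) (hcard : Y.card < 2 * S.card) : ∃ e ∈ E, e ⊆ S := by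
  by_contra! hnot
  have hmeet : ∀ e ∈ E, (e ∩ S).card ≤ 1 := fun e he => by
    by_contra! h
    have hsub : e ∩ S = e :=
      eq_of_subset_of_card_le inter_subset_left (by rw [(hE.1 e he).2]; omega)
    exact hnot e he (hsub ▸ inter_subset_right)
  have hS_le : S.card ≤ E.card :=
    calc S.card = (E.biUnion id ∩ S).card := by rw [hE.biUnion_eq, inter_eq_right.2 hS]
      _ = (E.biUnion fun e => e ∩ S).card := by rw [biUnion_inter]; rfl
      _ ≤ ∑ e ∈ E, (e ∩ S).card := card_biUnion_le
      _ ≤ ∑ _e ∈ E, 1 := sum_le_sum hmeet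
      _ = E.card := card_eq_sum_ones E |>.symm
  rw [hE.card_eq] at hcard
  omega

end IsPerfectMatchingOn

variable [DecidableEq α]

theorem isOneFactorization.isPerfectMatchingOn {v : ℕ} {X : Finset α}
    {F : Fin v → Finset (Finset α)} (hF : isOneFactorization X F) (i : Fin v) :
    IsPerfectMatchingOn X (F i) :=
  ⟨hF.1 i, hF.2.1 i⟩

theorem insert_mem_doublingBlocks {v : ℕ} (a : Fin v → α)
    {F : Fin v → Finset (Finset α)}
    {i : Fin v} {e : Finset α} (he : e ∈ F i) : insert (a i) e ∈ doublingBlocks a F :=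
  mem_biUnion.2 ⟨i, mem_univ i, mem_image_of_mem _ he⟩

theorem isStrictBicoloring.exists_ne {k : ℕ} {V : Finset α}
    {B : Finset (Finset α)} {φ : α → Fin k} (hφ : isStrictBicoloring V B φ)
    {T : Finset α} (hT : T ∈ B) (j : Fin k) :
    ∃ x ∈ T, φ x ≠ j := by
  by_contra! hmono
  have himg : T.image φ ⊆ {j} := fun i hi => by
    obtain ⟨x, hx, rfl⟩ := mem_image.1 hi
    exact mem_singleton.2 (hmono x hx)
  have := card_le_card himg
  rw [hφ.1 T hT, card_singleton] at this
  omega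

end

theorem stmt_6_general {α : Type*} [DecidableEq α] (v k : ℕ)
    (V : Finset α) (B : Finset (Finset α))
    (Y : Finset α) (hY : Y.card = v + 1)
    (F : Fin v → Finset (Finset α)) (hF : isOneFactorization Y F)
    (a : Fin v → α) (haV : V = Finset.image a Finset.univ)
    (ψ : α → Fin k)
    (hext : isStrictBicoloring (V ∪ Y) (B ∪ doublingBlocks a F) ψ)
    (n : Fin k → ℕ) (hn : ∀ i, (V.filter fun x => ψ x = i).card = n i)
    (c : Fin k → ℕ) (hc : ∀ i, (Y.filter fun x => ψ x = i).card = c i)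
    (j : Fin k) (hcj : 2 * c j > v + 1) (hnj : 1 ≤ n j) :
    False := by
  obtain ⟨_, hx⟩ := card_pos.1 (hn j ▸ hnj : 0 < (V.filter fun x => ψ x = j).card)
  obtain ⟨hxV, hxj⟩ := mem_filter.1 hx
  obtain ⟨q, -, rfl⟩ := mem_image.1 (haV ▸ hxV)
  obtain ⟨e, he, hej⟩ := (hF.isPerfectMatchingOn q).exists_subset_of_card_lt
    (filter_subset (fun x => ψ x = j) Y) (by rw [hc, hY]; omega)
  obtain ⟨x, hx, hxj'⟩ :=
    hext.exists_ne (mem_union_right B (insert_mem_doublingBlocks a he)) j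
  rcases mem_insert.1 hx with rfl | hxe
  · exact hxj' hxj
  · exact hxj' (mem_filter.1 (hej hxe)).2

theorem stmt_6 {α : Type*} [DecidableEq α] (v k : ℕ)
    (V : Finset α) (B : Finset (Finset α)) (hV : V.card = v) (hSTS : isSTS V B)
    (Y : Finset α) (hY : Y.card = v + 1) (hdisj : Disjoint V Y)
    (F : Fin v → Finset (Finset α)) (hF : isOneFactorization Y F)
    (a : Fin v → α) (ha : Function.Injective a) (haV : V = Finset.image a Finset.univ)
    (ψ : α → Fin k)
    (hext : isStrictBicoloring (V ∪ Y) (B ∪ doublingBlocks a F) ψ)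
    (hres : isStrictBicoloring V B ψ)
    (n : Fin k → ℕ) (hn : ∀ i, (V.filter fun x => ψ x = i).card = n i)
    (c : Fin k → ℕ) (hc : ∀ i, (Y.filter fun x => ψ x = i).card = c i)
    (j : Fin k) (hcj : 2 * c j > v + 1) (hnj : 1 ≤ n j) :
    False :=
  stmt_6_general v k V B Y hY F hF a haV ψ hext n hn c hc j hcj hnj
end

section
/- The unique STS(9) admits a strict 3-bicoloring with class sizes (1,4,4): there is a coloring of its 9 points with 3 colors, with class sizes 1, 4, 4, such that every triple receives exactly two colors. -/
open Finset

/-!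
Fix a point `p`. The blocks through `p` cut the remaining points into pairs; in STS(9) there are
four of them. Colour `p` with `0`, the points of two blocks through `p` with `1` and the rest with
`2`. A block through `p` is then coloured `{0, 1}` or `{0, 2}`. A block avoiding `p` meets every
other block in at most one point, so it can be covered by neither two blocks coloured `1` nor two
blocks coloured `2`: it sees both colours.
-/

theorem card_image_eq_two {β γ : Type*} [DecidableEq γ] {s : Finset β} {f : β → γ} {a b : γ}
    (hab : a ≠ b) (hs : ∀ x ∈ s, f x = a ∨ f x = b) (ha : ∃ x ∈ s, f x = a)
    (hb : ∃ x ∈ s, f x = b) : (s.image f).card = 2 := by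
  suffices s.image f = {a, b} by rw [this, card_pair hab]
  ext c
  simp only [mem_image, mem_insert, mem_singleton]
  constructor
  · rintro ⟨x, hx, rfl⟩
    exact hs x hx
  · rintro (rfl | rfl)
    exacts [ha, hb]

section

variable {α : Type*} [DecidableEq α]

def blocksThrough (B : Finset (Finset α)) (p : α) : Finset (Finset α) :=
  B.filter (p ∈ ·)

@[simp]
theorem mem_blocksThrough {B : Finset (Finset α)} {p : α} {T : Finset α} :
    T ∈ blocksThrough B p ↔ T ∈ B ∧ p ∈ T :=
  mem_filter

theorem blocksThrough_subset (B : Finset (Finset α)) (p : α) : blocksThrough B p ⊆ B :=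
  filter_subset _ B

namespace isSTS

variable {V : Finset α} {B : Finset (Finset α)}

theorem eq_of_mem_of_mem (h : isSTS V B) {T₁ T₂ : Finset α} (h₁ : T₁ ∈ B) (h₂ : T₂ ∈ B)
    {x y : α} (hxy : x ≠ y) (hx₁ : x ∈ T₁) (hy₁ : y ∈ T₁) (hx₂ : x ∈ T₂) (hy₂ : y ∈ T₂) :
    T₁ = T₂ := by
  have hpair {T : Finset α} (hx : x ∈ T) (hy : y ∈ T) : {x, y} ⊆ T :=
    insert_subset hx (singleton_subset_iff.2 hy)
  have hV := (h.1 T₁ h₁).1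
  exact (h.2 {x, y} (hpair (hV hx₁) (hV hy₁)) (card_pair hxy)).unique
    ⟨h₁, hpair hx₁ hy₁⟩ ⟨h₂, hpair hx₂ hy₂⟩

theorem exists_mem_mem (h : isSTS V B) {x y : α} (hx : x ∈ V) (hy : y ∈ V) (hxy : x ≠ y) :
    ∃ T ∈ B, x ∈ T ∧ y ∈ T := by
  obtain ⟨T, ⟨hT, hxyT⟩, -⟩ :=
    h.2 {x, y} (insert_subset hx (singleton_subset_iff.2 hy)) (card_pair hxy)
  exact ⟨T, hT, hxyT (mem_insert_self _ _), hxyT (mem_insert_of_mem (mem_singleton_self _))⟩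

theorem card_inter_le_one (h : isSTS V B) {T₁ T₂ : Finset α} (h₁ : T₁ ∈ B) (h₂ : T₂ ∈ B)
    (hne : T₁ ≠ T₂) : (T₁ ∩ T₂).card ≤ 1 := by
  by_contra! hlt
  obtain ⟨x, hx, y, hy, hxy⟩ := one_lt_card.1 hlt
  rw [mem_inter] at hx hy
  exact hne (h.eq_of_mem_of_mem h₁ h₂ hxy hx.1 hy.1 hx.2 hy.2)

theorem three_le_card_of_subset_biUnion (h : isSTS V B) {T : Finset α} (hT : T ∈ B)
    {F : Finset (Finset α)} (hF : F ⊆ B) (hTF : T ∉ F) (hcover : T ⊆ F.biUnion id) :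
    3 ≤ F.card := by
  calc 3 = T.card := (h.1 T hT).2.symm
    _ = (F.biUnion (T ∩ ·)).card := by
      rw [← inter_biUnion]
      exact congrArg card (inter_eq_left.2 hcover).symm
    _ ≤ ∑ L ∈ F, (T ∩ L).card := card_biUnion_le
    _ ≤ ∑ _L ∈ F, 1 :=
      sum_le_sum fun L hL => h.card_inter_le_one hT (hF hL) fun hTL => hTF (hTL ▸ hL)
    _ = F.card := by rw [card_eq_sum_ones]

theorem card_biUnion_erase (h : isSTS V B) {p : α} {S : Finset (Finset α)}
    (hS : S ⊆ blocksThrough B p) : (S.biUnion (·.erase p)).card = 2 * S.card := by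
  have hdisj : (S : Set (Finset α)).PairwiseDisjoint (·.erase p) := by
    intro T₁ h₁ T₂ h₂ hne
    rw [Function.onFun, disjoint_left]
    intro x hx₁ hx₂
    obtain ⟨hT₁, hp₁⟩ := mem_blocksThrough.1 (hS h₁)
    obtain ⟨hT₂, hp₂⟩ := mem_blocksThrough.1 (hS h₂)
    rw [mem_erase] at hx₁ hx₂
    exact hne (h.eq_of_mem_of_mem hT₁ hT₂ hx₁.1 hx₁.2 hp₁ hx₂.2 hp₂)
  rw [card_biUnion hdisj, sum_const_nat fun T hT => ?_, mul_comm]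
  obtain ⟨hT, hp⟩ := mem_blocksThrough.1 (hS hT)
  rw [card_erase_of_mem hp, (h.1 T hT).2]

theorem biUnion_erase_blocksThrough (h : isSTS V B) {p : α} (hp : p ∈ V) :
    (blocksThrough B p).biUnion (·.erase p) = V.erase p := by
  ext x
  simp only [mem_biUnion, mem_erase, mem_blocksThrough]
  constructor
  · rintro ⟨T, ⟨hT, -⟩, hxp, hx⟩
    exact ⟨hxp, (h.1 T hT).1 hx⟩
  · rintro ⟨hxp, hx⟩
    obtain ⟨T, hT, hpT, hxT⟩ := h.exists_mem_mem hp hx (Ne.symm hxp)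
    exact ⟨T, ⟨hT, hpT⟩, hxp, hxT⟩

theorem card_eq_two_mul_card_blocksThrough_add_one (h : isSTS V B) {p : α} (hp : p ∈ V) :
    V.card = 2 * (blocksThrough B p).card + 1 := by
  rw [← h.card_biUnion_erase subset_rfl, h.biUnion_erase_blocksThrough hp,
    card_erase_add_one hp]

end isSTS

def pencilColoring (p : α) (S : Finset (Finset α)) (x : α) : Fin 3 :=
  if x = p then 0 else if x ∈ S.biUnion id then 1 else 2

theorem filter_pencilColoring_eq_zero {V : Finset α} {p : α} (hp : p ∈ V)
    (S : Finset (Finset α)) : V.filter (fun x => pencilColoring p S x = 0) = {p} := by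
  ext x
  rw [mem_filter, mem_singleton]
  by_cases hx : x = p
  · simp [pencilColoring, hx, hp]
  · rw [iff_false_intro hx, iff_false, not_and, pencilColoring, if_neg hx]
    intro _
    split_ifs <;> decide

namespace isSTS

variable {V : Finset α} {B : Finset (Finset α)} {p : α} {S : Finset (Finset α)}

theorem pencilColoring_of_mem_blocksThrough (h : isSTS V B) (hS : S ⊆ blocksThrough B p)
    {T : Finset α} (hT : T ∈ blocksThrough B p) {x : α} (hx : x ∈ T) (hxp : x ≠ p) :
    pencilColoring p S x = if T ∈ S then 1 else 2 := by
  obtain ⟨hTB, hpT⟩ := mem_blocksThrough.1 hT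
  have hmem : x ∈ S.biUnion id ↔ T ∈ S := by
    rw [mem_biUnion]
    constructor
    · rintro ⟨L, hL, hxL⟩
      obtain ⟨hLB, hpL⟩ := mem_blocksThrough.1 (hS hL)
      rwa [h.eq_of_mem_of_mem hTB hLB hxp hx hpT hxL hpL]
    · exact fun hTS => ⟨T, hTS, hx⟩
  simp only [pencilColoring, if_neg hxp, hmem]

theorem filter_pencilColoring_eq_one (h : isSTS V B) (hS : S ⊆ blocksThrough B p) :
    V.filter (fun x => pencilColoring p S x = 1) = S.biUnion (·.erase p) := by
  ext x
  simp only [mem_filter, pencilColoring, mem_biUnion, mem_erase, id]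
  constructor
  · rintro ⟨-, hx⟩
    split_ifs at hx with hxp hxS
    · exact absurd hx (by decide)
    · obtain ⟨L, hL, hxL⟩ := hxS
      exact ⟨L, hL, hxp, hxL⟩
    · exact absurd hx (by decide)
  · rintro ⟨L, hL, hxp, hxL⟩
    refine ⟨(h.1 L (mem_blocksThrough.1 (hS hL)).1).1 hxL, ?_⟩
    rw [if_neg hxp, if_pos ⟨L, hL, hxL⟩]

theorem filter_pencilColoring_eq_two (h : isSTS V B) (hp : p ∈ V)
    (hS : S ⊆ blocksThrough B p) :
    V.filter (fun x => pencilColoring p S x = 2) =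
      (blocksThrough B p \ S).biUnion (·.erase p) := by
  ext x
  simp only [mem_filter, mem_biUnion, mem_erase, mem_sdiff]
  constructor
  · rintro ⟨hxV, hx⟩
    have hxp : x ≠ p := by rintro rfl; simp [pencilColoring] at hx
    obtain ⟨T, hTB, hpT, hxT⟩ := h.exists_mem_mem hp hxV (Ne.symm hxp)
    have hT : T ∈ blocksThrough B p := mem_blocksThrough.2 ⟨hTB, hpT⟩
    rw [h.pencilColoring_of_mem_blocksThrough hS hT hxT hxp] at hx
    refine ⟨T, ⟨hT, fun hTS => ?_⟩, hxp, hxT⟩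
    simp [hTS] at hx
  · rintro ⟨T, ⟨hT, hTS⟩, hxp, hxT⟩
    refine ⟨(h.1 T (mem_blocksThrough.1 hT).1).1 hxT, ?_⟩
    rw [h.pencilColoring_of_mem_blocksThrough hS hT hxT hxp, if_neg hTS]

theorem card_image_pencilColoring_of_mem (h : isSTS V B) (hS : S ⊆ blocksThrough B p)
    {T : Finset α} (hT : T ∈ blocksThrough B p) :
    (T.image (pencilColoring p S)).card = 2 := by
  obtain ⟨hTB, hpT⟩ := mem_blocksThrough.1 hT
  obtain ⟨x, hxT, hxp⟩ := exists_mem_ne (by rw [(h.1 T hTB).2]; decide) p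
  refine card_image_eq_two (a := 0) (b := if T ∈ S then 1 else 2) (by split_ifs <;> decide)
    (fun y hyT => ?_) ⟨p, hpT, by simp [pencilColoring]⟩
    ⟨x, hxT, h.pencilColoring_of_mem_blocksThrough hS hT hxT hxp⟩
  by_cases hyp : y = p
  · simp [pencilColoring, hyp]
  · exact Or.inr (h.pencilColoring_of_mem_blocksThrough hS hT hyT hyp)

theorem card_image_pencilColoring_of_notMem (h : isSTS V B) (hp : p ∈ V)
    (hS : S ⊆ blocksThrough B p) (hS₂ : S.card ≤ 2) (hSc₂ : (blocksThrough B p \ S).card ≤ 2)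
    {T : Finset α} (hT : T ∈ B) (hpT : p ∉ T) :
    (T.image (pencilColoring p S)).card = 2 := by
  have hcolor : ∀ y ∈ T, pencilColoring p S y = if y ∈ S.biUnion id then 1 else 2 :=
    fun y hy => if_neg fun (hyp : y = p) => hpT (hyp ▸ hy)
  refine card_image_eq_two (a := 1) (b := 2) (by decide) (fun y hy => ?_) ?_ ?_
  · rw [hcolor y hy]
    split_ifs <;> simp
  · by_contra! hno
    have hcover : T ⊆ (blocksThrough B p \ S).biUnion id := fun y hy => by
      have hy₂ : y ∈ V.filter (fun x => pencilColoring p S x = 2) := by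
        rw [mem_filter, hcolor y hy, if_neg fun hyS => hno y hy (by rw [hcolor y hy, if_pos hyS])]
        exact ⟨(h.1 T hT).1 hy, rfl⟩
      rw [h.filter_pencilColoring_eq_two hp hS] at hy₂
      exact biUnion_mono (fun L _ => erase_subset p L) hy₂
    have := h.three_le_card_of_subset_biUnion hT (sdiff_subset.trans (blocksThrough_subset B p))
      (fun hTP => hpT (mem_blocksThrough.1 (mem_sdiff.1 hTP).1).2) hcover
    omega
  · by_contra! hno
    have hcover : T ⊆ S.biUnion id := fun y hy => by
      by_contra hyS
      exact hno y hy (by rw [hcolor y hy, if_neg hyS])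
    have := h.three_le_card_of_subset_biUnion hT (hS.trans (blocksThrough_subset B p))
      (fun hTS => hpT (mem_blocksThrough.1 (hS hTS)).2) hcover
    omega

theorem isStrictBicoloring_pencilColoring (h : isSTS V B) (hp : p ∈ V)
    (hS : S ⊆ blocksThrough B p) (hS₀ : S.Nonempty) (hS₂ : S.card ≤ 2)
    (hSc₀ : (blocksThrough B p \ S).Nonempty) (hSc₂ : (blocksThrough B p \ S).card ≤ 2) :
    isStrictBicoloring V B (pencilColoring p S) := by
  refine ⟨fun T hT => ?_, fun i => ?_⟩
  · by_cases hpT : p ∈ T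
    · exact h.card_image_pencilColoring_of_mem hS (mem_blocksThrough.2 ⟨hT, hpT⟩)
    · exact h.card_image_pencilColoring_of_notMem hp hS hS₂ hSc₂ hT hpT
  · suffices (V.filter (fun x => pencilColoring p S x = i)).Nonempty by
      simpa only [Finset.Nonempty, mem_filter] using this
    obtain rfl | rfl | rfl : i = 0 ∨ i = 1 ∨ i = 2 := by omega
    · rw [filter_pencilColoring_eq_zero hp]
      exact singleton_nonempty p
    · rw [h.filter_pencilColoring_eq_one hS, ← card_pos, h.card_biUnion_erase hS]
      exact Nat.mul_pos two_pos hS₀.card_pos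
    · rw [h.filter_pencilColoring_eq_two hp hS, ← card_pos, h.card_biUnion_erase sdiff_subset]
      exact Nat.mul_pos two_pos hSc₀.card_pos

end isSTS

end

theorem stmt_12 {α : Type*} [DecidableEq α]
    (V : Finset α) (B : Finset (Finset α)) (hV : V.card = 9) (hSTS : isSTS V B) :
    ∃ φ : α → Fin 3, isStrictBicoloring V B φ ∧
      (V.filter fun x => φ x = 0).card = 1 ∧
      (V.filter fun x => φ x = 1).card = 4 ∧
      (V.filter fun x => φ x = 2).card = 4 := by
  obtain ⟨p, hp⟩ : V.Nonempty := card_pos.1 (by omega)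
  have hP : (blocksThrough B p).card = 4 := by
    have := hSTS.card_eq_two_mul_card_blocksThrough_add_one hp
    omega
  obtain ⟨S, hS, hS₂⟩ := exists_subset_card_eq (s := blocksThrough B p) (n := 2) (by omega)
  have hSc₂ : (blocksThrough B p \ S).card = 2 := by rw [card_sdiff_of_subset hS, hP, hS₂]
  refine ⟨pencilColoring p S, hSTS.isStrictBicoloring_pencilColoring hp hS
    (card_pos.1 (by omega)) hS₂.le (card_pos.1 (by omega)) hSc₂.le, ?_, ?_, ?_⟩
  · rw [filter_pencilColoring_eq_zero hp, card_singleton]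
  · rw [hSTS.filter_pencilColoring_eq_one hS, hSTS.card_biUnion_erase hS, hS₂]
  · rw [hSTS.filter_pencilColoring_eq_two hp hS, hSTS.card_biUnion_erase sdiff_subset, hSc₂]
end
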